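/- Let (X, Y, ⟨·,·⟩) be a dual pairing, h : X → ℝ ∪ {+∞}, and (x,y) ∈ X × Y. Then χ⁽∞⁾_{∂h}(x,y) ≥ (h + ι_{D(∂h)})(x) + (h* + ι_{R(∂h)})(y), where χ⁽∞⁾_{∂h} = inf_{n≥1} χ⁽ⁿ⁾_{∂h}. -/

import Mathlib

open scoped Classical

variable {X Y : Type*} [AddCommGroup X] [Module ℝ X] [AddCommGroup Y] [Module ℝ Y]

/-- `y` is a subgradient of `h : X → ℝ ∪ {+∞}` at `x`. -/
def IsSubgrad (b : X →ₗ[ℝ] Y →ₗ[ℝ] ℝ) (h : X → EReal) (x : X) (y : Y) : Prop :=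
  ∃ s : ℝ, h x = (s : EReal) ∧ ∀ w : X, ((b (w - x) y : ℝ) : EReal) + (s : EReal) ≤ h w

/-- The convex conjugate `h*` with respect to the pairing. -/
noncomputable def conj (b : X →ₗ[ℝ] Y →ₗ[ℝ] ℝ) (h : X → EReal) (y : Y) : EReal :=
  ⨆ x : X, (((b x y : ℝ) : EReal) - h x)

/-- The set of values over which `χ⁽∞⁾_{∂h}(x,y) = inf_{n ≥ 1} χ⁽ⁿ⁾_{∂h}(x,y)` is
taken: the `n = 1` value `⟨x,y⟩` (when `(x,y) ∈ Graph ∂h`), and for `n ≥ 2` the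
values `⟨x₁,y⟩ + ∑ᵢ₌₂ⁿ⁻¹⟨xᵢ-xᵢ₋₁,yᵢ⟩ + ⟨x-xₙ₋₁,yₙ⟩` over admissible chains. -/
def chiInfSet (b : X →ₗ[ℝ] Y →ₗ[ℝ] ℝ) (h : X → EReal) (x : X) (y : Y) :
    Set EReal :=
  {r | (IsSubgrad b h x y ∧ r = ((b x y : ℝ) : EReal)) ∨
    (∃ n : ℕ, 2 ≤ n ∧ ∃ c : ℕ → X × Y,
      IsSubgrad b h (c 1).1 y ∧ IsSubgrad b h x (c n).2 ∧
      (∀ i ∈ Finset.Icc 2 (n - 1), IsSubgrad b h (c i).1 (c i).2) ∧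
      r = ((b (c 1).1 y
          + ∑ i ∈ Finset.Icc 2 (n - 1), b ((c i).1 - (c (i - 1)).1) (c i).2
          + b (x - (c (n - 1)).1) (c n).2 : ℝ) : EReal))}

/-!
A subgradient pins `h` to a finite value, so along a chain `x₁, …, xₙ₋₁, x` of points of
`D(∂h)` the subgradient inequality at each point, tested at its predecessor, bounds the increments
of `h`, and these telescope to `h x - h x₁ ≤ ∑ᵢ ⟨xᵢ - xᵢ₋₁, yᵢ⟩`. Fenchel–Young at `(x₁, y)` gives
`h* y ≤ ⟨x₁, y⟩ - h x₁`; adding the two bounds the chain value from below. The indicator terms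
vanish because any chain (or the case `n = 1`) exhibits `x ∈ D(∂h)` and `y ∈ R(∂h)`.
-/

namespace IsSubgrad

variable {b : X →ₗ[ℝ] Y →ₗ[ℝ] ℝ} {h : X → EReal} {u w : X} {v v' : Y}

lemma coe_toReal (hu : IsSubgrad b h u v) : ((h u).toReal : EReal) = h u := by
  obtain ⟨s, hs, -⟩ := hu
  rw [hs, EReal.toReal_coe]

lemma add_toReal_le (hu : IsSubgrad b h u v) (w : X) :
    ((b (w - u) v + (h u).toReal : ℝ) : EReal) ≤ h w := by
  obtain ⟨s, hs, hle⟩ := hu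
  rw [hs, EReal.toReal_coe, EReal.coe_add]
  exact hle w

lemma toReal_sub_le (hu : IsSubgrad b h u v) (hw : IsSubgrad b h w v') :
    (h u).toReal - (h w).toReal ≤ b (u - w) v := by
  have key := hu.add_toReal_le w
  rw [← hw.coe_toReal, EReal.coe_le_coe_iff] at key
  have hneg : b (w - u) v = -b (u - w) v := by
    rw [← neg_sub, map_neg, LinearMap.neg_apply]
  linarith

lemma conj_le (hu : IsSubgrad b h u v) : conj b h v ≤ ((b u v - (h u).toReal : ℝ) : EReal) := by
  refine iSup_le fun w => ?_
  have key := hu.add_toReal_le w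
  induction hw : h w with
  | bot => rw [hw] at key; exact absurd key (not_le.2 (EReal.bot_lt_coe _))
  | top => rw [EReal.sub_top]; exact bot_le
  | coe t =>
    rw [hw, EReal.coe_le_coe_iff, map_sub, LinearMap.sub_apply] at key
    rw [← EReal.coe_sub, EReal.coe_le_coe_iff]
    linarith

lemma add_conj_le (hu : IsSubgrad b h u v) (hw : IsSubgrad b h w v') :
    h u + conj b h v' ≤ (((h u).toReal - (h w).toReal + b w v' : ℝ) : EReal) := by
  calc h u + conj b h v' ≤ (h u).toReal + ((b w v' - (h w).toReal : ℝ) : EReal) := by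
        rw [hu.coe_toReal]
        gcongr
        exact hw.conj_le
    _ = (((h u).toReal - (h w).toReal + b w v' : ℝ) : EReal) := by
        rw [← EReal.coe_add]
        ring_nf

end IsSubgrad

lemma toReal_sub_le_sum_of_isSubgrad {b : X →ₗ[ℝ] Y →ₗ[ℝ] ℝ} {h : X → EReal} {p : ℕ → X}
    {v : ℕ → Y} {m n : ℕ} (hmn : m ≤ n) (hm : ∃ w, IsSubgrad b h (p m) w)
    (hv : ∀ i ∈ Finset.Ioc m n, IsSubgrad b h (p i) (v i)) :
    (h (p n)).toReal - (h (p m)).toReal ≤ ∑ i ∈ Finset.Ioc m n, b (p i - p (i - 1)) (v i) := by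
  induction n, hmn using Nat.le_induction with
  | base => simp
  | succ n hmn ih =>
    have hv' : ∀ i ∈ Finset.Ioc m n, IsSubgrad b h (p i) (v i) := fun i hi =>
      hv i (Finset.Ioc_subset_Ioc_right n.le_succ hi)
    have hpn : ∃ w, IsSubgrad b h (p n) w := by
      rcases hmn.eq_or_lt with rfl | hlt
      · exact hm
      · exact ⟨v n, hv' n (Finset.mem_Ioc.2 ⟨hlt, le_rfl⟩)⟩
    obtain ⟨w, hw⟩ := hpn
    have step := (hv (n + 1) (Finset.mem_Ioc.2 ⟨by omega, le_rfl⟩)).toReal_sub_le hw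
    rw [Finset.sum_Ioc_succ_top hmn, Nat.add_sub_cancel]
    linarith [ih hv']

lemma toReal_sub_le_chain {b : X →ₗ[ℝ] Y →ₗ[ℝ] ℝ} {h : X → EReal} {x : X} {y : Y} {n : ℕ}
    (hn : 2 ≤ n) {c : ℕ → X × Y} (hfirst : IsSubgrad b h (c 1).1 y)
    (hlast : IsSubgrad b h x (c n).2)
    (hmid : ∀ i ∈ Finset.Icc 2 (n - 1), IsSubgrad b h (c i).1 (c i).2) :
    (h x).toReal - (h (c 1).1).toReal ≤
      ∑ i ∈ Finset.Icc 2 (n - 1), b ((c i).1 - (c (i - 1)).1) (c i).2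
        + b (x - (c (n - 1)).1) (c n).2 := by
  obtain ⟨k, rfl⟩ : ∃ k, n = k + 1 := ⟨n - 1, by omega⟩
  -- the chain's points, with `x` appended at index `n = k + 1`
  set p : ℕ → X := fun i => if i = k + 1 then x else (c i).1
  have hp_lt : ∀ i ≤ k, p i = (c i).1 := fun i hi => if_neg (by omega)
  have key := toReal_sub_le_sum_of_isSubgrad (p := p) (v := fun i => (c i).2) (m := 1)
    (n := k + 1) (by omega) ⟨y, by rwa [hp_lt 1 (by omega)]⟩ (by
      intro i hi
      obtain ⟨hi1, hik⟩ := Finset.mem_Ioc.1 hi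
      rcases hik.eq_or_lt with rfl | hlt
      · simpa [p] using hlast
      · rw [hp_lt i (by omega)]
        exact hmid i (Finset.mem_Icc.2 ⟨hi1, by omega⟩))
  rw [Finset.sum_Ioc_succ_top (by omega), ← Finset.Icc_add_one_left_eq_Ioc, Nat.add_sub_cancel,
    hp_lt 1 (by omega), hp_lt k le_rfl, show p (k + 1) = x from if_pos rfl] at key
  rw [Nat.add_sub_cancel]
  refine key.trans_eq (congrArg (· + _) (Finset.sum_congr rfl fun i hi => ?_))
  rw [Finset.mem_Icc] at hi
  rw [hp_lt i hi.2, hp_lt (i - 1) (by omega)]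

theorem chiInf_ge_general (b : X →ₗ[ℝ] Y →ₗ[ℝ] ℝ) (h : X → EReal)
    (x : X) (y : Y) :
    (h x + (if ∃ v : Y, IsSubgrad b h x v then (0 : EReal) else ⊤))
      + (conj b h y + (if ∃ u : X, IsSubgrad b h u y then (0 : EReal) else ⊤))
      ≤ sInf (chiInfSet b h x y) := by
  refine le_sInf ?_
  rintro r (⟨hxy, rfl⟩ | ⟨n, hn, c, hfirst, hlast, hmid, rfl⟩)
  · rw [if_pos ⟨y, hxy⟩, if_pos ⟨x, hxy⟩, add_zero, add_zero]
    simpa using hxy.add_conj_le hxy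
  · rw [if_pos ⟨_, hlast⟩, if_pos ⟨_, hfirst⟩, add_zero, add_zero]
    refine (hlast.add_conj_le hfirst).trans (EReal.coe_le_coe_iff.2 ?_)
    linarith [toReal_sub_le_chain hn hfirst hlast hmid]

/-- `χ⁽∞⁾_{∂h}(x,y) ≥ (h + ι_{D(∂h)})(x) + (h* + ι_{R(∂h)})(y)`. -/
theorem chiInf_ge (b : X →ₗ[ℝ] Y →ₗ[ℝ] ℝ) (h : X → EReal)
    (hbot : ∀ x : X, h x ≠ ⊥) (x : X) (y : Y) :
    (h x + (if ∃ v : Y, IsSubgrad b h x v then (0 : EReal) else ⊤))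
      + (conj b h y + (if ∃ u : X, IsSubgrad b h u y then (0 : EReal) else ⊤))
      ≤ sInf (chiInfSet b h x y) :=
  chiInf_ge_general b h x y
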